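/- (Theorem B) Let M be a finite subset of a countable surjunctive group G. Let A be a finite alphabet and S = A^(A^M). Suppose that σ_s : A^G → A^G is stably injective for some s ∈ S^G with uniformly bounded singularity. Then σ_s is stably invertible. -/

import Mathlib

open Function Set Pointwise

section Defs

variable {G A S : Type*} [Group G]

/-- The NUCA `σ_s : A^G → A^G` determined by the configuration of local
defining maps `s ∈ S^G`, `S = A^(A^M)`:
`σ_s(x)(g) = s(g)((g⁻¹x)|_M)` where `(g⁻¹x)(h) = x(gh)`. -/
def nuca {M : Finset G} (s : G → ((M → A) → A)) : (G → A) → (G → A) :=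
  fun x g => s g fun m => x (g * (m : G))

/-- The closure, in the prodiscrete topology on `S^G`, of the shift orbit
`{gs : g ∈ G}`, where `(gs)(h) = s(g⁻¹h)`. -/
def orbitClosure (s : G → S) : Set (G → S) :=
  @closure (G → S) (@Pi.topologicalSpace G (fun _ => S) fun _ => ⊥)
    {p | ∃ g : G, p = fun h => s (g⁻¹ * h)}

/-- `τ` is a NUCA with finite memory. -/
def IsNUCAFin (τ : (G → A) → (G → A)) : Prop :=
  ∃ (M : Finset G) (s : G → ((M → A) → A)), τ = nuca s

/-- `τ` is invertible: it is bijective and its inverse is a NUCA with finite memory. -/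
def IsInvertibleNUCA (τ : (G → A) → (G → A)) : Prop :=
  Function.Bijective τ ∧ ∃ ρ : (G → A) → (G → A), IsNUCAFin ρ ∧
    Function.LeftInverse ρ τ ∧ Function.RightInverse ρ τ

/-- `σ_s` is stably injective: `σ_p` is injective for every `p ∈ Σ(s)`. -/
def StablyInjective {M : Finset G} (s : G → ((M → A) → A)) : Prop :=
  ∀ p ∈ orbitClosure s, Function.Injective (nuca p)

/-- `σ_s` is stably invertible. -/
def StablyInvertible {M : Finset G} (s : G → ((M → A) → A)) : Prop :=
  ∃ (N : Finset G) (t : G → ((N → A) → A)),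
    ∀ p ∈ orbitClosure s, ∃ q ∈ orbitClosure t,
      nuca p ∘ nuca q = id ∧ nuca q ∘ nuca p = id

/-- Two configurations are asymptotic if they agree outside a finite set. -/
def Asymptotic (x y : G → S) : Prop :=
  ∃ Ω : Finset G, ∀ g ∉ Ω, x g = y g

/-- `s` is asymptotically constant. -/
def AsymptoticallyConstant (s : G → S) : Prop :=
  ∃ c : S, Asymptotic s fun _ => c

/-- `τ` is pre-injective. -/
def PreInjective (τ : (G → A) → (G → A)) : Prop :=
  ∀ x y : G → A, Asymptotic x y → τ x = τ y → x = y

/-- `τ` is post-surjective. -/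
def PostSurjective (τ : (G → A) → (G → A)) : Prop :=
  ∀ x y : G → A, Asymptotic y (τ x) → ∃ z : G → A, Asymptotic z x ∧ τ z = y

/-- `σ_s` is stably post-surjective: `σ_p` is post-surjective for all `p ∈ Σ(s)`. -/
def StablyPostSurjective {M : Finset G} (s : G → ((M → A) → A)) : Prop :=
  ∀ p ∈ orbitClosure s, PostSurjective (nuca p)

/-- `τ` is a cellular automaton: a NUCA with finite memory and a constant
configuration of local defining maps. -/
def IsCellularAutomaton (τ : (G → A) → (G → A)) : Prop :=
  ∃ (M : Finset G) (μ : (M → A) → A), τ = nuca fun _ : G => μ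

/-- `G` is surjunctive: over every finite alphabet, injective CA are surjective. -/
def Surjunctive (G : Type*) [Group G] : Prop :=
  ∀ (B : Type) [Fintype B] (τ : (G → B) → (G → B)),
    IsCellularAutomaton τ → Function.Injective τ → Function.Surjective τ

/-- `G` is post-injunctive: over every finite alphabet, post-surjective CA are
pre-injective. -/
def PostInjunctive (G : Type*) [Group G] : Prop :=
  ∀ (B : Type) [Fintype B] (τ : (G → B) → (G → B)),
    IsCellularAutomaton τ → PostSurjective τ → PreInjective τ

/-- `s` has uniformly bounded singularity: for every finite symmetric `E ∋ 1`
there is a finite `F ⊇ E` such that `s` is constant on `FE ∖ F`. -/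
def UniformlyBoundedSingularity (s : G → S) : Prop :=
  ∀ E : Finset G, (1 : G) ∈ E → (∀ g ∈ E, g⁻¹ ∈ E) →
    ∃ F : Finset G, E ⊆ F ∧ ∃ c : S,
      ∀ g ∈ ((F : Set G) * (E : Set G)) \ (F : Set G), s g = c

end Defs


/-!
By compactness of `Σ(s) × A^G × A^G`, stable injectivity gives one finite `N` such that
`σ_p(z)|_N` determines `z(1)` for every `p ∈ Σ(s)`. Reading off `z(1)` from a pattern on `N`
is a local rule, and it defines `t` with `σ_q ∘ σ_p = id` for the corresponding `q ∈ Σ(t)`;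
so it remains to show that every `σ_p` is surjective, and by compactness again it suffices to
do so for `σ_s`.

If `M` generates a finite subgroup `H`, `σ_p` acts separately on each finite union of cosets
`ΔH`, so injectivity gives surjectivity there. Otherwise, uniformly bounded singularity yields a
symbol `c` taken by `s` on collars `FE ∖ F` of arbitrarily large `F`. As `⟨M⟩` is infinite,
such collars contain arbitrarily large translates of any finite set, so the constant
configuration `c` lies in `Σ(s)`: `σ_c` is an injective cellular automaton, hence surjective
because `G` is surjunctive. Replacing `s` by `c` outside `F` gives an injective NUCA `σ'` which
agrees with `σ_c` far from `F`, so `σ_c⁻¹ ∘ σ'` is injective and the identity outside a finite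
set, hence surjective. Thus `σ'` is surjective, and `σ_s`, which agrees with `σ'` on `F`, hits
every configuration on `F`; as `F` can be taken to contain any finite set, `σ_s` is surjective.
-/

open scoped Topology Filter

section Prodiscrete

variable {G X : Type*} [TopologicalSpace X] [DiscreteTopology X]

theorem mem_closure_iff_forall_finite {T : Set (G → X)} {x : G → X} :
    x ∈ closure T ↔ ∀ Δ : Set G, Δ.Finite → ∃ y ∈ T, EqOn y x Δ := by
  have hnhds : 𝓝 x = Filter.pi fun g => 𝓟 {x g} := by simp [nhds_pi, nhds_discrete]
  have hbasis : (𝓝 x).HasBasis Set.Finite fun Δ => Δ.pi fun g => {x g} :=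
    hnhds ▸ Filter.hasBasis_pi_principal _
  simp only [mem_closure_iff_nhds_basis hbasis, Set.mem_pi, mem_singleton_iff, EqOn]

end Prodiscrete

section Shift

variable {G X : Type*} [Group G]

def shift (a : G) (x : G → X) : G → X := fun h => x (a⁻¹ * h)

@[simp]
theorem shift_apply (a : G) (x : G → X) (h : G) : shift a x h = x (a⁻¹ * h) := rfl

@[simp]
theorem shift_one (x : G → X) : shift 1 x = x := by
  funext h; simp

theorem shift_shift (a b : G) (x : G → X) : shift a (shift b x) = shift (a * b) x := by
  funext h; simp [mul_assoc]

theorem shift_inv_shift (a : G) (x : G → X) : shift a (shift a⁻¹ x) = x := by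
  simp [shift_shift]

end Shift

section OrbitClosure

variable {G S : Type*} [Group G]

theorem orbitClosure_eq_closure [TopologicalSpace S] [DiscreteTopology S] (s : G → S) :
    orbitClosure s = closure (range fun a : G => shift a s) := by
  rw [orbitClosure, DiscreteTopology.eq_bot (α := S)]
  congr 1
  ext p
  exact exists_congr fun a => eq_comm

theorem isClosed_orbitClosure [TopologicalSpace S] [DiscreteTopology S] (s : G → S) :
    IsClosed (orbitClosure s) := by
  rw [orbitClosure_eq_closure]
  exact isClosed_closure

theorem mem_orbitClosure_iff {s p : G → S} :
    p ∈ orbitClosure s ↔ ∀ Δ : Set G, Δ.Finite → ∃ a : G, EqOn (shift a s) p Δ := by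
  let : TopologicalSpace S := ⊥
  have : DiscreteTopology S := ⟨rfl⟩
  simp [orbitClosure_eq_closure, mem_closure_iff_forall_finite]

theorem self_mem_orbitClosure (s : G → S) : s ∈ orbitClosure s :=
  mem_orbitClosure_iff.2 fun _ _ => ⟨1, fun h _ => by simp⟩

theorem shift_mem_orbitClosure {s p : G → S} (hp : p ∈ orbitClosure s) (a : G) :
    shift a p ∈ orbitClosure s := by
  rw [mem_orbitClosure_iff] at hp ⊢
  intro Δ hΔ
  obtain ⟨b, hb⟩ := hp _ (hΔ.image (a⁻¹ * ·))
  exact ⟨a * b, fun h hh => by simpa [mul_assoc] using hb (mem_image_of_mem _ hh)⟩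

theorem orbitClosure_subset_of_mem {s q : G → S} (hq : q ∈ orbitClosure s) :
    orbitClosure q ⊆ orbitClosure s := by
  intro p hp
  rw [mem_orbitClosure_iff] at hp ⊢
  intro Δ hΔ
  obtain ⟨a, ha⟩ := hp Δ hΔ
  obtain ⟨b, hb⟩ := mem_orbitClosure_iff.1 (shift_mem_orbitClosure hq a) Δ hΔ
  exact ⟨b, hb.trans ha⟩

theorem mem_orbitClosure_slidingBlock {T : Type*} {N : Finset G} (φ : (N → S) → T)
    {s p : G → S} (hp : p ∈ orbitClosure s) :
    (fun g => φ fun n : N => p (g * n)) ∈ orbitClosure fun g => φ fun n : N => s (g * n) := by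
  rw [mem_orbitClosure_iff] at hp ⊢
  intro Δ hΔ
  obtain ⟨a, ha⟩ := hp (Δ * N) (hΔ.mul N.finite_toSet)
  refine ⟨a, fun h hh => ?_⟩
  simp only [shift_apply]
  congr 1
  funext n
  simpa [mul_assoc] using ha (mul_mem_mul hh n.2)

end OrbitClosure

section Nuca

variable {G A : Type*} [Group G] {M : Finset G}

theorem nuca_apply_congr {p p' : G → ((M → A) → A)} {x x' : G → A} {g : G} (hp : p g = p' g)
    (hx : ∀ m : M, x (g * m) = x' (g * m)) : nuca p x g = nuca p' x' g := by
  simp only [nuca, hp, hx]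

theorem nuca_shift (p : G → ((M → A) → A)) (a : G) (x : G → A) :
    nuca (shift a p) (shift a x) = shift a (nuca p x) := by
  funext g
  simp [nuca, mul_assoc]

theorem continuous_nuca [TopologicalSpace A] [DiscreteTopology A] [Finite A] :
    Continuous fun q : (G → ((M → A) → A)) × (G → A) => nuca q.1 q.2 := by
  refine continuous_pi fun g => ?_
  have heval : Continuous fun r : ((M → A) → A) × (M → A) => r.1 r.2 :=
    continuous_of_discreteTopology
  have hlocal : Continuous fun q : (G → ((M → A) → A)) × (G → A) =>
      (q.1 g, fun m : M => q.2 (g * m)) := by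
    fun_prop
  exact heval.comp hlocal

theorem isClosed_setOf_eqOn_nuca [TopologicalSpace A] [DiscreteTopology A] [Finite A]
    (N : Set G) :
    IsClosed {q : (G → ((M → A) → A)) × (G → A) × (G → A) |
      EqOn (nuca q.1 q.2.1) (nuca q.1 q.2.2) N} := by
  simp only [EqOn, ofPred_forall]
  exact isClosed_biInter fun n _ => isClosed_eq
    ((continuous_apply n).comp (continuous_nuca.comp (continuous_fst.prodMk continuous_snd.fst)))
    ((continuous_apply n).comp (continuous_nuca.comp (continuous_fst.prodMk continuous_snd.snd)))

theorem surjective_nuca_of_forall_finite [Finite A] {p : G → ((M → A) → A)}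
    (h : ∀ y : G → A, ∀ Δ : Set G, Δ.Finite → ∃ x, EqOn (nuca p x) y Δ) :
    Surjective (nuca p) := by
  let : TopologicalSpace A := ⊥
  have : DiscreteTopology A := ⟨rfl⟩
  have hclosed : IsClosed (range (nuca p)) :=
    (isCompact_range (continuous_nuca.comp (Continuous.prodMk_right p))).isClosed
  intro y
  rw [← mem_range, ← hclosed.closure_eq, mem_closure_iff_forall_finite]
  intro Δ hΔ
  obtain ⟨x, hx⟩ := h y Δ hΔ
  exact ⟨_, mem_range_self x, hx⟩

theorem surjective_nuca_of_mem_orbitClosure [Finite A] {s p : G → ((M → A) → A)}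
    (hs : Surjective (nuca s)) (hp : p ∈ orbitClosure s) : Surjective (nuca p) := by
  refine surjective_nuca_of_forall_finite fun y Δ hΔ => ?_
  obtain ⟨a, ha⟩ := mem_orbitClosure_iff.1 hp Δ hΔ
  obtain ⟨x, hx⟩ := hs (shift a⁻¹ y)
  refine ⟨shift a x, fun g hg => ?_⟩
  calc nuca p (shift a x) g = nuca (shift a s) (shift a x) g :=
        nuca_apply_congr (ha hg).symm fun _ => rfl
    _ = y g := by rw [nuca_shift, hx, shift_inv_shift]

end Nuca

section InverseMemory

variable {G A : Type*} [Group G] {M N : Finset G}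

/-- `N` is a memory set, common to all `p ∈ Σ(s)`, for a left inverse of `σ_p`. -/
def IsUniformInverseMemory (s : G → ((M → A) → A)) (N : Finset G) : Prop :=
  ∀ p ∈ orbitClosure s, ∀ z z' : G → A, EqOn (nuca p z) (nuca p z') N → z 1 = z' 1

theorem IsUniformInverseMemory.apply_eq {s p : G → ((M → A) → A)}
    (hN : IsUniformInverseMemory s N) (hp : p ∈ orbitClosure s) {z z' : G → A} {g : G}
    (h : ∀ n ∈ N, nuca p z (g * n) = nuca p z' (g * n)) : z g = z' g := by
  simpa using hN _ (shift_mem_orbitClosure hp g⁻¹) (shift g⁻¹ z) (shift g⁻¹ z')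
    fun n hn => by simpa [nuca_shift] using h n hn

theorem IsUniformInverseMemory.mono {s q : G → ((M → A) → A)}
    (hN : IsUniformInverseMemory s N) (hq : q ∈ orbitClosure s) : IsUniformInverseMemory q N :=
  fun p hp => hN p (orbitClosure_subset_of_mem hq hp)

theorem StablyInjective.exists_isUniformInverseMemory [Finite A] {s : G → ((M → A) → A)}
    (hs : StablyInjective s) : ∃ N, IsUniformInverseMemory s N := by
  let : TopologicalSpace A := ⊥
  have : DiscreteTopology A := ⟨rfl⟩
  by_contra! h
  simp only [IsUniformInverseMemory, not_forall] at h
  let C (N : Finset G) : Set ((G → ((M → A) → A)) × (G → A) × (G → A)) :=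
    {q | q.1 ∈ orbitClosure s ∧ EqOn (nuca q.1 q.2.1) (nuca q.1 q.2.2) N ∧ q.2.1 1 ≠ q.2.2 1}
  have hC_antitone : Antitone C := fun N N' hNN' q hq => ⟨hq.1, hq.2.1.mono hNN', hq.2.2⟩
  have hC_nonempty (N) : (C N).Nonempty := by
    obtain ⟨p, hp, z, z', hzz', hne⟩ := h N
    exact ⟨(p, z, z'), hp, hzz', hne⟩
  have hC_closed (N) : IsClosed (C N) :=
    ((isClosed_orbitClosure s).preimage continuous_fst).inter
      ((isClosed_setOf_eqOn_nuca _).inter ((isClosed_discrete {a : A × A | a.1 ≠ a.2}).preimage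
        (f := fun q : (G → ((M → A) → A)) × (G → A) × (G → A) => (q.2.1 1, q.2.2 1)) (by fun_prop)))
  obtain ⟨⟨p, z, z'⟩, hq⟩ :=
    IsCompact.nonempty_iInter_of_directed_nonempty_isCompact_isClosed C
      hC_antitone.directed_ge hC_nonempty (fun N => (hC_closed N).isCompact) hC_closed
  simp only [C, mem_iInter, mem_ofPred] at hq
  refine (hq ∅).2.2 (congrFun (hs p (hq ∅).1 (funext fun g => ?_)) 1)
  exact (hq {g}).2.1 (Finset.mem_singleton_self g)

open Classical in
/-- The value at `1` of some preimage of the pattern `u` under the local rules `π`, if there is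
one; by `IsUniformInverseMemory` it does not depend on the preimage chosen. -/
noncomputable def localInverse [Nonempty A] (π : N → (M → A) → A) (u : N → A) : A :=
  if h : ∃ x : G → A, ∀ n : N, π n (fun m => x (n * m)) = u n then h.choose 1
  else Classical.arbitrary A

theorem localInverse_spec [Nonempty A] {π : N → (M → A) → A} {u : N → A}
    (h : ∃ x : G → A, ∀ n : N, π n (fun m => x (n * m)) = u n) :
    ∃ x : G → A, (∀ n : N, π n (fun m => x (n * m)) = u n) ∧ localInverse π u = x 1 :=
  ⟨h.choose, h.choose_spec, dif_pos h⟩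

noncomputable def inverseConf [Nonempty A] (N : Finset G) (p : G → ((M → A) → A)) :
    G → ((N → A) → A) :=
  fun g => localInverse fun n : N => p (g * n)

theorem nuca_inverseConf_nuca [Nonempty A] {s p : G → ((M → A) → A)}
    (hN : IsUniformInverseMemory s N) (hp : p ∈ orbitClosure s) (x : G → A) :
    nuca (inverseConf N p) (nuca p x) = x := by
  funext g
  have hx (n : N) : p (g * n) (fun m => shift g⁻¹ x (n * m)) = nuca p x (g * n) := by
    simp [nuca, mul_assoc]
  obtain ⟨z, hz, hz1⟩ := localInverse_spec ⟨_, hx⟩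
  refine hz1.trans ?_
  simpa using hN _ (shift_mem_orbitClosure hp g⁻¹) z (shift g⁻¹ x) fun n hn => by
    simpa [nuca] using (hz ⟨n, hn⟩).trans (hx ⟨n, hn⟩).symm

theorem stablyInvertible_of_surjective [Nonempty A] {s : G → ((M → A) → A)}
    (hN : IsUniformInverseMemory s N) (hsurj : ∀ p ∈ orbitClosure s, Surjective (nuca p)) :
    StablyInvertible s := by
  refine ⟨N, inverseConf N s, fun p hp => ⟨inverseConf N p, mem_orbitClosure_slidingBlock _ hp,
    funext fun y => ?_, funext (nuca_inverseConf_nuca hN hp)⟩⟩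
  obtain ⟨x, rfl⟩ := hsurj p hp y
  simp [nuca_inverseConf_nuca hN hp]

theorem stablyInvertible_of_isEmpty [IsEmpty A] (s : G → ((M → A) → A)) :
    StablyInvertible s :=
  ⟨{1}, fun _ u => isEmptyElim (u ⟨1, Finset.mem_singleton_self 1⟩), fun _ _ =>
    ⟨_, self_mem_orbitClosure _, funext fun x => isEmptyElim (x 1),
      funext fun x => isEmptyElim (x 1)⟩⟩

end InverseMemory

theorem exists_apply_eq_of_injective {X A : Type*} [Finite A] {τ : (X → A) → (X → A)}
    (hτ : Injective τ) {Ω : Set X} (hΩ : Ω.Finite) {w v : X → A}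
    (hwv : ∀ x, EqOn x w Ωᶜ → EqOn (τ x) v Ωᶜ) {y : X → A} (hy : EqOn y v Ωᶜ) :
    ∃ x, τ x = y := by
  classical
  have : Finite Ω := hΩ
  let ext (u : Ω → A) : X → A := fun g => if h : g ∈ Ω then u ⟨g, h⟩ else w g
  have hext (u) : EqOn (ext u) w Ωᶜ := fun g hg => dif_neg hg
  have heq (u) (z : X → A) (hΩz : Ω.domRestrict (τ (ext u)) = Ω.domRestrict z)
      (hz : EqOn z v Ωᶜ) : τ (ext u) = z := by
    funext g
    by_cases hg : g ∈ Ω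
    · exact congrFun hΩz ⟨g, hg⟩
    · exact (hwv _ (hext u) hg).trans (hz hg).symm
  have hinj : Injective fun u => Ω.domRestrict (τ (ext u)) := by
    intro u u' huu'
    funext g
    simpa [ext] using congrFun (hτ (heq u _ huu' (hwv _ (hext u')))) g
  obtain ⟨u, hu⟩ := Finite.injective_iff_surjective.1 hinj (Ω.domRestrict y)
  exact ⟨ext u, heq u y hu hy⟩

theorem surjective_nuca_of_injective_of_finite_closure {G A : Type*} [Group G] [Finite A]
    {M : Finset G} {p : G → ((M → A) → A)}
    (hM : (Subgroup.closure (M : Set G) : Set G).Finite) (hp : Injective (nuca p)) :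
    Surjective (nuca p) := by
  classical
  refine surjective_nuca_of_forall_finite fun y Δ hΔ => ?_
  set H := Subgroup.closure (M : Set G)
  have hstable : ∀ g ∉ Δ * (H : Set G), ∀ m : M, g * m ∉ Δ * (H : Set G) := by
    rintro g hg m ⟨d, hd, k, hk, hdk⟩
    refine hg ⟨d, hd, k * (m : G)⁻¹, H.mul_mem hk (H.inv_mem (Subgroup.subset_closure m.2)), ?_⟩
    simp only at hdk ⊢
    rw [← mul_assoc, hdk, mul_inv_cancel_right]
  obtain ⟨x, hx⟩ := exists_apply_eq_of_injective hp (hΔ.mul hM) (w := y) (v := nuca p y)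
    (fun x hx g hg => nuca_apply_congr rfl fun m => hx (hstable g hg m))
    (piecewise_eqOn_compl (Δ * (H : Set G)) y (nuca p y))
  refine ⟨x, fun g hg => ?_⟩
  rw [hx, piecewise_eq_of_mem _ _ _ (subset_mul_left _ H.one_mem hg)]

theorem exists_mem_mul_notMem {G : Type*} [Group G] {F E : Set G} (hF : F.Finite)
    (hne : F.Nonempty) (hE : (Subgroup.closure E : Set G).Infinite) : ∃ a ∈ F * E, a ∉ F := by
  by_contra! hFE
  obtain ⟨f₀, hf₀⟩ := hne
  let P : Submonoid G :=
    { carrier := {g | ∀ f ∈ F, f * g ∈ F}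
      mul_mem' := fun ha hb f hf => mul_assoc f _ _ ▸ hb _ (ha f hf)
      one_mem' := fun f hf => (mul_one f).symm ▸ hf }
  have hP : (P : Set G).Finite :=
    (hF.preimage (mul_right_injective f₀).injOn).subset fun g hg => hg f₀ hf₀
  have hEP : E ⊆ P := fun e he f hf => hFE _ (mul_mem_mul hf he)
  -- A finite submonoid consists of elements of finite order, so it contains `⟨E⟩`.
  have hE_finOrder (e) (he : e ∈ E) : IsOfFinOrder e :=
    finite_powers.1 (hP.subset (Submonoid.powers_le.2 (hEP he)))
  apply hE
  rw [← Subgroup.coe_toSubmonoid, Subgroup.closure_toSubmonoid_of_isOfFinOrder hE_finOrder]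
  exact hP.subset (Submonoid.closure_le.2 hEP)

theorem mul_notMem_of_notMem_mul_inv {G : Type*} [Group G] {F N : Set G} {g n : G}
    (hg : g ∉ F * N⁻¹) (hn : n ∈ N) : g * n ∉ F :=
  fun hgn => hg ⟨g * n, hgn, n⁻¹, inv_mem_inv.2 hn, mul_inv_cancel_right g n⟩

section Collar

variable {G S : Type*} [Group G]

def IsCollarValue (s : G → S) (c : S) : Prop :=
  ∀ E : Set G, E.Finite → ∃ F : Set G, F.Finite ∧ E ⊆ F ∧ ∀ g ∈ (F * E) \ F, s g = c

theorem UniformlyBoundedSingularity.exists_isCollarValue [Finite S] {s : G → S}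
    (hs : UniformlyBoundedSingularity s) : ∃ c, IsCollarValue s c := by
  by_contra! h
  simp only [IsCollarValue, not_forall, not_exists, not_and] at h
  choose E hE_fin hE using h
  have hU : (⋃ c, E c).Finite := finite_iUnion hE_fin
  set E₀ := ((hU.union hU.inv).insert 1).toFinset
  have hEE₀ (c) : E c ⊆ E₀ := fun g hg =>
    (Finite.mem_toFinset _).2 (mem_insert_of_mem _ (Or.inl (mem_iUnion_of_mem c hg)))
  have hE₀_symm (g) (hg : g ∈ E₀) : g⁻¹ ∈ E₀ := by
    simp only [E₀, Finite.mem_toFinset, mem_insert_iff, mem_union, mem_inv, inv_inv,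
      inv_eq_one] at hg ⊢
    tauto
  obtain ⟨F, hE₀F, c, hc⟩ := hs E₀ (by simp [E₀]) hE₀_symm
  obtain ⟨g, ⟨hgFE, hgF⟩, hne⟩ := hE c F F.finite_toSet ((hEE₀ c).trans hE₀F)
  exact hne (hc g ⟨mul_subset_mul_left (hEE₀ c) hgFE, hgF⟩)

theorem IsCollarValue.const_mem_orbitClosure {s : G → S} {c : S} (hc : IsCollarValue s c)
    {K : Set G} (hK : K.Finite) (hK_inf : (Subgroup.closure K : Set G).Infinite) :
    (fun _ => c) ∈ orbitClosure s := by
  rw [mem_orbitClosure_iff]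
  intro Δ hΔ
  set E := insert 1 (K ∪ Δ ∪ Δ⁻¹)
  have h1E : (1 : G) ∈ E := mem_insert _ _
  have hKE : K ⊆ E := fun k hk => mem_insert_of_mem _ (Or.inl (Or.inl hk))
  have hΔE : Δ ⊆ E := fun h hh => mem_insert_of_mem _ (Or.inl (Or.inr hh))
  have hΔinvE : Δ⁻¹ ⊆ E := fun h hh => mem_insert_of_mem _ (Or.inr hh)
  have hE : E.Finite := ((hK.union hΔ).union hΔ.inv).insert 1
  obtain ⟨F, hF, hEF, hcF⟩ := hc (E * E * E) ((hE.mul hE).mul hE)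
  have h1F : (1 : G) ∈ F * E := by
    simpa using mul_mem_mul (hEF (by simpa using mul_mem_mul (mul_mem_mul h1E h1E) h1E)) h1E
  -- The translate `a Δ` lies in the collar `F E³ ∖ F` as soon as `a ∈ F E² ∖ F E`.
  obtain ⟨a, haFEE, haFE⟩ := exists_mem_mul_notMem (hF.mul hE) ⟨1, h1F⟩
    (hK_inf.mono (Subgroup.closure_mono hKE))
  refine ⟨a⁻¹, fun h hh => ?_⟩
  simp only [shift_apply, inv_inv]
  refine hcF _ ⟨?_, fun hahF => haFE ?_⟩
  · simpa only [mul_assoc] using mul_mem_mul haFEE (hΔE hh)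
  · simpa using mul_mem_mul hahF (hΔinvE (inv_mem_inv.2 hh))

end Collar

section Truncation

variable {G A : Type*} [Group G] {M : Finset G} {s : G → ((M → A) → A)} {c : (M → A) → A}
  {N : Finset G} {F : Set G} [DecidablePred (· ∈ F)]

theorem nuca_piecewise_of_notMem (x : G → A) {g : G} (hg : g ∉ F) :
    nuca (F.piecewise s fun _ => c) x g = nuca (fun _ => c) x g :=
  nuca_apply_congr (piecewise_eq_of_notMem _ _ _ hg) fun _ => rfl

theorem injective_nuca_piecewise (hN : IsUniformInverseMemory (fun _ : G => c) N)
    (hs : Injective (nuca s)) (hcollar : ∀ g ∈ (F * (N : Set G)⁻¹ * (M : Set G)⁻¹) \ F, s g = c) :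
    Injective (nuca (F.piecewise s fun _ => c)) := by
  intro x x' hxx'
  have hout : EqOn x x' (F * (N : Set G)⁻¹)ᶜ := fun g hg =>
    hN.apply_eq (self_mem_orbitClosure _) fun n hn => by
      have hgn := mul_notMem_of_notMem_mul_inv hg hn
      rw [← nuca_piecewise_of_notMem x hgn, ← nuca_piecewise_of_notMem x' hgn, hxx']
  refine hs (funext fun g => ?_)
  by_cases hg : g ∈ F * (N : Set G)⁻¹ * (M : Set G)⁻¹
  · have hsg : F.piecewise s (fun _ => c) g = s g := by
      by_cases hgF : g ∈ F
      · exact piecewise_eq_of_mem _ _ _ hgF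
      · rw [piecewise_eq_of_notMem _ _ _ hgF, hcollar g ⟨hg, hgF⟩]
    rw [← nuca_apply_congr hsg fun _ => rfl, hxx', nuca_apply_congr hsg fun _ => rfl]
  · refine nuca_apply_congr rfl fun m => hout fun hgm => hg ?_
    simpa using mul_mem_mul hgm (inv_mem_inv.2 m.2)

theorem surjective_nuca_piecewise [Finite A] (hF : F.Finite)
    (hN : IsUniformInverseMemory (fun _ : G => c) N) (hc : Surjective (nuca fun _ : G => c))
    (hinj : Injective (nuca (F.piecewise s fun _ => c))) :
    Surjective (nuca (F.piecewise s fun _ => c)) := by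
  choose ρ hρ using hc
  let τ := ρ ∘ nuca (F.piecewise s fun _ => c)
  have hτ (x) : nuca (fun _ => c) (τ x) = nuca (F.piecewise s fun _ => c) x := hρ _
  have hτ_inj : Injective τ := fun x x' hxx' => hinj (by rw [← hτ, ← hτ, hxx'])
  have hτ_out (x) : EqOn (τ x) x (F * (N : Set G)⁻¹)ᶜ := fun g hg =>
    hN.apply_eq (self_mem_orbitClosure _) fun n hn => by
      rw [hτ, nuca_piecewise_of_notMem x (mul_notMem_of_notMem_mul_inv hg hn)]
  intro y
  obtain ⟨x, hx⟩ := exists_apply_eq_of_injective hτ_inj (hF.mul N.finite_toSet.inv)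
    (fun x hx => (hτ_out x).trans hx) (eqOn_refl (ρ y) _)
  exact ⟨x, by rw [← hτ, hx, hρ]⟩

end Truncation

theorem IsCollarValue.surjective_nuca {G A : Type*} [Group G] [Finite A] {M : Finset G}
    {s : G → ((M → A) → A)} {c : (M → A) → A} (hcol : IsCollarValue s c)
    (hs : Injective (nuca s)) (hc : Surjective (nuca fun _ : G => c)) {N : Finset G}
    (hN : IsUniformInverseMemory (fun _ : G => c) N) : Surjective (nuca s) := by
  classical
  refine surjective_nuca_of_forall_finite fun y Δ hΔ => ?_
  obtain ⟨F, hF, hΔF, hcF⟩ := hcol (Δ ∪ (N : Set G)⁻¹ * (M : Set G)⁻¹)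
    (hΔ.union (N.finite_toSet.inv.mul M.finite_toSet.inv))
  have hcollar : ∀ g ∈ (F * (N : Set G)⁻¹ * (M : Set G)⁻¹) \ F, s g = c := fun g hg =>
    hcF g ⟨mul_subset_mul_left subset_union_right (mul_assoc F _ _ ▸ hg.1), hg.2⟩
  obtain ⟨x, hx⟩ := surjective_nuca_piecewise hF hN hc (injective_nuca_piecewise hN hs hcollar) y
  refine ⟨x, fun g hg => ?_⟩
  rw [← hx]
  exact nuca_apply_congr (piecewise_eq_of_mem _ _ _ (hΔF (Or.inl hg))).symm fun _ => rfl

theorem Surjunctive.surjective_nuca_const {G : Type*} [Group G] (hG : Surjunctive G)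
    {A : Type*} [Fintype A] {M : Finset G} (μ : (M → A) → A)
    (hμ : Injective (nuca fun _ : G => μ)) : Surjective (nuca fun _ : G => μ) := by
  let e := Fintype.equivFin A
  let E : (G → A) ≃ (G → Fin (Fintype.card A)) := (Equiv.refl G).arrowCongr e
  have hCA : IsCellularAutomaton (E ∘ nuca (fun _ : G => μ) ∘ E.symm) :=
    ⟨M, fun u => e (μ (e.symm ∘ u)), rfl⟩
  have hsurj := hG _ _ hCA (E.injective.comp (hμ.comp E.symm.injective))
  simpa using (E.symm.surjective.comp hsurj).comp E.surjective

theorem StablyInjective.surjective_nuca {G : Type*} [Group G] (hG : Surjunctive G) {A : Type*}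
    [Fintype A] {M : Finset G} {s : G → ((M → A) → A)} (hubs : UniformlyBoundedSingularity s)
    (hinj : StablyInjective s) {N : Finset G} (hN : IsUniformInverseMemory s N)
    {p : G → ((M → A) → A)} (hp : p ∈ orbitClosure s) : Surjective (nuca p) := by
  by_cases hM : (Subgroup.closure (M : Set G) : Set G).Finite
  · exact surjective_nuca_of_injective_of_finite_closure hM (hinj p hp)
  obtain ⟨c, hc⟩ := hubs.exists_isCollarValue
  have hc_mem := hc.const_mem_orbitClosure M.finite_toSet hM
  have hs_surj := hc.surjective_nuca (hinj s (self_mem_orbitClosure s))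
    (hG.surjective_nuca_const c (hinj _ hc_mem)) (hN.mono hc_mem)
  exact surjective_nuca_of_mem_orbitClosure hs_surj hp

theorem theoremB_general {G : Type*} [Group G] (hG : Surjunctive G)
    {A : Type*} [Fintype A] {M : Finset G} (s : G → ((M → A) → A))
    (hubs : UniformlyBoundedSingularity s) (hinj : StablyInjective s) :
    StablyInvertible s := by
  rcases isEmpty_or_nonempty A with hA | hA
  · exact stablyInvertible_of_isEmpty s
  obtain ⟨N, hN⟩ := hinj.exists_isUniformInverseMemory
  exact stablyInvertible_of_surjective hN fun p hp => hinj.surjective_nuca hG hubs hN hp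

/-- Theorem B: over a countable surjunctive group universe and a
finite alphabet, every stably injective NUCA with finite memory whose
configuration of local defining maps has uniformly bounded singularity is
stably invertible. -/
theorem theoremB {G : Type*} [Group G] [Countable G] (hG : Surjunctive G)
    {A : Type*} [Fintype A] {M : Finset G} (s : G → ((M → A) → A))
    (hubs : UniformlyBoundedSingularity s) (hinj : StablyInjective s) :
    StablyInvertible s :=
  theoremB_general hG s hubs hinj
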